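/- Let K, K' ⊆ ℝ₊ⁿ be anti-blocking bodies. Then Vol(K − K') = Σ_E Vol_{dim E}(P_E K) · Vol_{n−dim E}(P_{E⊥} K'), summing over all coordinate subspaces E of ℝⁿ (with the convention that the 0-dimensional volume of a nonempty set is 1). -/

import Mathlib

open Set MeasureTheory Pointwise
open scoped RealInnerProductSpace

/-- A convex body `K ⊆ ℝ₊ⁿ` (compact, convex, containing `0`) is anti-blocking if
for all `y ∈ K` and `x ∈ ℝ₊ⁿ` with `x ≤ y` coordinatewise, `x ∈ K`. -/
def IsAntiBlocking (n : ℕ) (K : Set (EuclideanSpace ℝ (Fin n))) : Prop :=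
  IsCompact K ∧ Convex ℝ K ∧ (0 : EuclideanSpace ℝ (Fin n)) ∈ K ∧
    (∀ y ∈ K, ∀ i, (0:ℝ) ≤ y i) ∧
    ∀ y ∈ K, ∀ x : EuclideanSpace ℝ (Fin n),
      (∀ i, 0 ≤ x i) → (∀ i, x i ≤ y i) → x ∈ K

/-- Restriction of a vector to the coordinates in `S`, viewed as a point of the
Euclidean space indexed by `S`; this realizes the orthogonal projection onto the
coordinate subspace `E = span{e i : i ∈ S}` inside that subspace. -/
def restrictTo {n : ℕ} (S : Finset (Fin n)) (x : EuclideanSpace ℝ (Fin n)) :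
    EuclideanSpace ℝ {i : Fin n // i ∈ S} :=
  WithLp.toLp 2 (fun i => x i.val)


/-!
Cut `ℝⁿ` into the closed orthants `O_S = {z | z_i ≥ 0 for i ∈ S, z_i ≤ 0 for i ∉ S}`, which
overlap only in coordinate hyperplanes. For anti-blocking `K, K'`, a point `z ∈ O_S` lies in
`K - K'` iff its positive part lies in `K` and its negative part in `K'`; since these parts are
supported on `S` and `Sᶜ`, this says `(K - K') ∩ O_S = P_S K × (-P_{Sᶜ} K')` in the splitting
`ℝⁿ = ℝ^S × ℝ^{Sᶜ}`, whose volume is `Vol(P_S K) · Vol(P_{Sᶜ} K')` by Fubini.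
-/

theorem IsCompact.sub {G : Type*} [AddGroup G] [TopologicalSpace G] [IsTopologicalAddGroup G]
    {s t : Set G} (hs : IsCompact s) (ht : IsCompact t) : IsCompact (s - t) := by
  rw [sub_eq_add_neg]
  exact hs.add ht.neg

section Orthant

variable {ι : Type*}

def orthant (S : Finset ι) : Set (EuclideanSpace ℝ ι) :=
  {z | (∀ i ∈ S, 0 ≤ z i) ∧ ∀ i ∉ S, z i ≤ 0}

theorem orthant_inter_orthant_subset {S T : Finset ι} {i : ι} (hS : i ∈ S) (hT : i ∉ T) :
    orthant S ∩ orthant T ⊆ {z | z i = 0} :=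
  fun _ ⟨hzS, hzT⟩ => le_antisymm (hzT.2 i hT) (hzS.1 i hS)

variable [Fintype ι]

theorem measurableSet_orthant (S : Finset ι) : MeasurableSet (orthant S) := by
  unfold orthant
  measurability

theorem iUnion_orthant : ⋃ S : Finset ι, orthant S = univ := by
  classical
  refine eq_univ_of_forall fun z => mem_iUnion.2 ⟨Finset.univ.filter (0 ≤ z ·), ?_, ?_⟩
  · intro i hi
    exact (Finset.mem_filter.1 hi).2
  · intro i hi
    exact (by simpa using hi : z i < 0).le

theorem volume_setOf_apply_eq_zero (i : ι) : volume {z : EuclideanSpace ℝ ι | z i = 0} = 0 := by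
  have hker : {z : EuclideanSpace ℝ ι | z i = 0} =
      LinearMap.ker (EuclideanSpace.proj i : EuclideanSpace ℝ ι →L[ℝ] ℝ).toLinearMap := by
    ext z
    simp
  rw [hker]
  refine Measure.addHaar_submodule _ _ fun h => ?_
  classical
  have := h ▸ Submodule.mem_top (x := EuclideanSpace.single i (1 : ℝ))
  simp at this

theorem pairwise_aedisjoint_orthant :
    Pairwise (fun S T : Finset ι => AEDisjoint volume (orthant S) (orthant T)) := by
  intro S T hST
  obtain ⟨i, hi⟩ : ∃ i, ¬(i ∈ S ↔ i ∈ T) := by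
    by_contra! h
    exact hST (Finset.ext h)
  by_cases hiS : i ∈ S
  · exact measure_mono_null (orthant_inter_orthant_subset hiS (by tauto))
      (volume_setOf_apply_eq_zero i)
  · exact measure_mono_null ((inter_comm _ _).subset.trans
      (orthant_inter_orthant_subset (by tauto) hiS)) (volume_setOf_apply_eq_zero i)

theorem volume_eq_sum_volume_inter_orthant {s : Set (EuclideanSpace ℝ ι)}
    (hs : NullMeasurableSet s) : volume s = ∑ S : Finset ι, volume (s ∩ orthant S) := by
  conv_lhs => rw [← inter_univ s, ← iUnion_orthant, inter_iUnion]
  rw [measure_iUnion₀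
    (pairwise_aedisjoint_orthant.mono fun _ _ h => h.mono inter_subset_right inter_subset_right)
    fun S => hs.inter (measurableSet_orthant S).nullMeasurableSet, tsum_fintype]

end Orthant

theorem volume_preimage_restrictTo_inter {n : ℕ} (S : Finset (Fin n))
    (A : Set (EuclideanSpace ℝ {i // i ∈ S})) (B : Set (EuclideanSpace ℝ {i // i ∈ Sᶜ})) :
    volume (restrictTo S ⁻¹' A ∩ restrictTo Sᶜ ⁻¹' B) = volume A * volume B := by
  classical
  let e : EuclideanSpace ℝ (Fin n) ≃ᵐ
      EuclideanSpace ℝ {i // i ∈ S} × EuclideanSpace ℝ {i // i ∈ Sᶜ} :=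
    (MeasurableEquiv.toLp 2 _).symm.trans <|
      (MeasurableEquiv.piEquivPiSubtypeProd (fun _ => ℝ) (· ∈ S)).trans <|
        (MeasurableEquiv.toLp 2 _).prodCongr <|
          (MeasurableEquiv.piCongrLeft (fun _ => ℝ)
            (Equiv.subtypeEquivRight fun _ => Finset.mem_compl.symm)).trans
            (MeasurableEquiv.toLp 2 _)
  -- The library lemma and `restrictTo` use different `Fintype {i // i ∈ S}` instances.
  have hsplit :
      MeasurePreserving (MeasurableEquiv.piEquivPiSubtypeProd (fun _ : Fin n => ℝ) (· ∈ S))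
        volume (volume.prod volume) := by
    convert volume_preserving_piEquivPiSubtypeProd (fun _ : Fin n => ℝ) (· ∈ S) using 1
    · rfl
    · rw [Measure.volume_eq_prod]
      congr!
  have he : MeasurePreserving e volume (volume.prod volume) :=
    ((PiLp.volume_preserving_toLp _).prod ((PiLp.volume_preserving_toLp _).comp
      (volume_measurePreserving_piCongrLeft _ _))).comp
      (hsplit.comp (PiLp.volume_preserving_ofLp (Fin n)))
  have hpre : restrictTo S ⁻¹' A ∩ restrictTo Sᶜ ⁻¹' B = e ⁻¹' (A ×ˢ B) := rfl
  rw [hpre, he.measure_preimage_equiv, Measure.prod_prod]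

namespace IsAntiBlocking

variable {n : ℕ} {K : Set (EuclideanSpace ℝ (Fin n))}

theorem nonneg (hK : IsAntiBlocking n K) {x : EuclideanSpace ℝ (Fin n)} (hx : x ∈ K)
    (i : Fin n) : 0 ≤ x i :=
  hK.2.2.2.1 x hx i

theorem mem_of_le (hK : IsAntiBlocking n K) {x y : EuclideanSpace ℝ (Fin n)} (hy : y ∈ K)
    (hx₀ : ∀ i, 0 ≤ x i) (hxy : ∀ i, x i ≤ y i) : x ∈ K :=
  hK.2.2.2.2 y hy x hx₀ hxy

theorem restrictTo_mem_image_of_le (hK : IsAntiBlocking n K) {S : Finset (Fin n)}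
    {x w : EuclideanSpace ℝ (Fin n)} (hx : x ∈ K) (hwx : ∀ i, w i ≤ x i)
    (hw₀ : ∀ i ∈ S, 0 ≤ w i) : restrictTo S w ∈ restrictTo S '' K := by
  refine ⟨WithLp.toLp 2 fun i => max (w i) 0,
    hK.mem_of_le hx (fun i => le_max_right _ _) fun i => max_le (hwx i) (hK.nonneg hx i), ?_⟩
  ext i
  exact max_eq_left (hw₀ i i.2)

theorem exists_mem_eqOn_restrictTo (hK : IsAntiBlocking n K) {S : Finset (Fin n)}
    {w : EuclideanSpace ℝ (Fin n)} (hw : restrictTo S w ∈ restrictTo S '' K) :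
    ∃ x ∈ K, (∀ i ∈ S, x i = w i) ∧ ∀ i ∉ S, x i = 0 := by
  classical
  obtain ⟨y, hy, hyw⟩ := hw
  have hyw' : ∀ i ∈ S, y i = w i := fun i hi => congrArg (· ⟨i, hi⟩) hyw
  refine ⟨WithLp.toLp 2 fun i => if i ∈ S then y i else 0,
    hK.mem_of_le hy (fun i => ?_) (fun i => ?_), fun i hi => ?_, fun i hi => if_neg hi⟩
  · dsimp only
    split_ifs
    exacts [hK.nonneg hy i, le_rfl]
  · dsimp only
    split_ifs
    exacts [le_rfl, hK.nonneg hy i]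
  · simp [hi, hyw' i hi]

end IsAntiBlocking

theorem sub_inter_orthant_eq {n : ℕ} {K K' : Set (EuclideanSpace ℝ (Fin n))}
    (hK : IsAntiBlocking n K) (hK' : IsAntiBlocking n K') (S : Finset (Fin n)) :
    (K - K') ∩ orthant S =
      restrictTo S ⁻¹' (restrictTo S '' K) ∩ restrictTo Sᶜ ⁻¹' (-(restrictTo Sᶜ '' K')) := by
  ext z
  constructor
  · rintro ⟨⟨x, hx, y, hy, rfl⟩, hzS, hzSc⟩
    refine ⟨hK.restrictTo_mem_image_of_le hx (fun i => ?_) hzS,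
      hK'.restrictTo_mem_image_of_le (w := -(x - y)) hy (fun i => ?_) fun i hi => ?_⟩
    · simp [hK'.nonneg hy i]
    · simp [hK.nonneg hx i]
    · simpa using hzSc i (Finset.mem_compl.1 hi)
  · rintro ⟨hzK, hzK'⟩
    obtain ⟨x, hx, hxS, hxSc⟩ := hK.exists_mem_eqOn_restrictTo hzK
    obtain ⟨y, hy, hyS, hySc⟩ := hK'.exists_mem_eqOn_restrictTo (w := -z) hzK'
    refine ⟨⟨x, hx, y, hy, ?_⟩, fun i hi => ?_, fun i hi => ?_⟩
    · ext i
      by_cases hi : i ∈ S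
      · simp [hxS i hi, hySc i (Finset.notMem_compl.2 hi)]
      · simp [hxSc i hi, hyS i (Finset.mem_compl.2 hi)]
    · exact hxS i hi ▸ hK.nonneg hx i
    · simpa [hyS i (Finset.mem_compl.2 hi)] using hK'.nonneg hy i

/-- `Vol(K - K') = Σ_E Vol_{dim E}(P_E K) · Vol_{n - dim E}(P_{E⊥} K')`, summing over
all coordinate subspaces `E`; the volume of the projection is taken inside the
corresponding coordinate subspace (for `E = 0` it is `1` for nonempty sets). -/
theorem volume_sub_antiBlocking {n : ℕ}
    {K K' : Set (EuclideanSpace ℝ (Fin n))}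
    (hK : IsAntiBlocking n K) (hK' : IsAntiBlocking n K') :
    volume (K - K') =
      ∑ S : Finset (Fin n), volume (restrictTo S '' K) * volume (restrictTo Sᶜ '' K') := by
  rw [volume_eq_sum_volume_inter_orthant (hK.1.sub hK'.1).measurableSet.nullMeasurableSet]
  refine Finset.sum_congr rfl fun S _ => ?_
  rw [sub_inter_orthant_eq hK hK' S, volume_preimage_restrictTo_inter, Measure.measure_neg]
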